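/- If N is a sound deterministic negotiation and A is the minimal DFA of Paths(N), then the negotiation N_A is sound: every execution of N_A from its initial configuration extends to an execution reaching its final configuration. -/

import Mathlib

universe u v w

variable {P : Type u} {A : Type v}

/-- One swap of two adjacent independent letters. -/
def SwapStep (dom : A → Set P) (u v : List A) : Prop :=
  ∃ x y : List A, ∃ a b : A, dom a ∩ dom b = ∅ ∧
    u = x ++ a :: b :: y ∧ v = x ++ b :: a :: y

/-- Mazurkiewicz trace equivalence: reflexive-transitive-symmetric closure of swaps. -/
def TraceEq (dom : A → Set P) : List A → List A → Prop :=
  Relation.EqvGen (SwapStep dom)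

open Classical in
/-- Projection of a word on a process `p`: keep letters whose domain contains `p`. -/
noncomputable def proj (dom : A → Set P) (p : P) : List A → List A
  | [] => []
  | a :: w => if p ∈ dom a then a :: proj dom p w else proj dom p w

/-- A word `t` is co-prime with minimal letter `b` if every trace-equivalent word starts with `b`. -/
def CoPrime (dom : A → Set P) (t : List A) (b : A) : Prop :=
  ∀ v, TraceEq dom t v → ∃ v', v = b :: v'

/-- A `(b,p)`-step: `s = b·s'` is co-prime with minimal letter `b`, `p ∈ dom b`,
and `b` is the only letter of `s` involving `p`. -/
def IsStep (dom : A → Set P) (s : List A) (b : A) (p : P) : Prop :=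
  p ∈ dom b ∧ CoPrime dom s b ∧ ∃ s', s = b :: s' ∧ ∀ a ∈ s', p ∉ dom a

/-- A (deterministic) negotiation diagram. -/
structure Negotiation (P : Type u) (A : Type v) where
  Node : Type w
  dnode : Node → Set P
  ninit : Node
  nfin : Node
  tr : Node → A → P → Option Node

namespace Negotiation

/-- Well-formedness conditions of a negotiation diagram over distributed alphabet `dom`. -/
def WellFormed (N : Negotiation P A) (dom : A → Set P) : Prop :=
  (∀ n, (N.dnode n).Nonempty) ∧
  N.dnode N.ninit = Set.univ ∧
  N.dnode N.nfin = Set.univ ∧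
  (∀ n a p n', N.tr n a p = some n' →
    N.dnode n = dom a ∧ p ∈ dom a ∧ p ∈ N.dnode n' ∧
    ∀ q ∈ dom a, (N.tr n a q).isSome)

/-- Node `n` is enabled in configuration `C`. -/
def Enabled (N : Negotiation P A) (n : N.Node) (C : P → N.Node) : Prop :=
  ∀ p ∈ N.dnode n, C p = n

/-- `n` is the unique node enabled in `C`. -/
def UniqueEnabled (N : Negotiation P A) (n : N.Node) (C : P → N.Node) : Prop :=
  N.Enabled n C ∧ ∀ m, N.Enabled m C → m = n

/-- A step of a negotiation on action `a` between configurations. -/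
def Step (N : Negotiation P A) (dom : A → Set P) (C : P → N.Node) (a : A)
    (C' : P → N.Node) : Prop :=
  ∃ n, N.Enabled n C ∧ (∀ p ∈ dom a, N.tr n a p = some (C' p)) ∧
    ∀ p, p ∉ dom a → C' p = C p

/-- Execution of a word between configurations. -/
def Run (N : Negotiation P A) (dom : A → Set P) :
    (P → N.Node) → List A → (P → N.Node) → Prop
  | C, [], C' => C = C'
  | C, a :: word, C'' => ∃ C', N.Step dom C a C' ∧ N.Run dom C' word C''

/-- The initial configuration: all processes in the initial node. -/
def Cinit (N : Negotiation P A) : P → N.Node := fun _ => N.ninit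

/-- The final configuration: all processes in the final node. -/
def Cfin (N : Negotiation P A) : P → N.Node := fun _ => N.nfin

/-- The language of successful executions of `N`. -/
def Lang (N : Negotiation P A) (dom : A → Set P) (word : List A) : Prop :=
  N.Run dom N.Cinit word N.Cfin

/-- Soundness: every execution from the initial configuration extends to a successful one. -/
def Sound (N : Negotiation P A) (dom : A → Set P) : Prop :=
  ∀ word C, N.Run dom N.Cinit word C → ∃ v, N.Run dom C v N.Cfin

/-- A local path of process `p` in the graph of `N`. -/
def PPath (N : Negotiation P A) (p : P) : N.Node → List A → N.Node → Prop
  | n, [], n' => n = n'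
  | n, a :: word, n'' => ∃ n', N.tr n a p = some n' ∧ N.PPath p n' word n''

/-- A local path in the graph of `N`, labelled over the alphabet `A_dom` of pairs `(a,p)`. -/
def GPath (N : Negotiation P A) : N.Node → List (A × P) → N.Node → Prop
  | n, [], n' => n = n'
  | n, x :: word, n'' => ∃ n', N.tr n x.1 x.2 = some n' ∧ N.GPath n' word n''

/-- `Paths(N)`: labels of local paths from the initial to the final node. -/
def PathsL (N : Negotiation P A) : Set (List (A × P)) :=
  { w | N.GPath N.ninit w N.nfin }

end Negotiation

/-- A DFA with a partial transition function and a single final state. -/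
structure PDFA (B : Type v) where
  S : Type w
  init : S
  trd : S → B → Option S
  fin : S

/-- Run of a partial DFA on a word. -/
def DRun (D : PDFA B) : D.S → List B → D.S → Prop
  | s, [], s' => s = s'
  | s, x :: word, s'' => ∃ s', D.trd s x = some s' ∧ DRun D s' word s''

/-- Acceptance from a state. -/
def AccFrom (D : PDFA B) (s : D.S) (word : List B) : Prop := DRun D s word D.fin

/-- Acceptance of the DFA. -/
def Accepts (D : PDFA B) (word : List B) : Prop := AccFrom D D.init word

/-- Trimmed: every state reachable and co-reachable. -/
def Trimmed (D : PDFA B) : Prop :=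
  ∀ s, (∃ word, DRun D D.init word s) ∧ (∃ word, DRun D s word D.fin)

/-- `D` is (a copy of) the minimal DFA of `L`: it accepts `L`, is trimmed,
and states with equal residual languages are equal (Myhill–Nerode). -/
def MinimalDFAFor (D : PDFA B) (L : Set (List B)) : Prop :=
  (∀ word, Accepts D word ↔ word ∈ L) ∧ Trimmed D ∧
  ∀ s s', (∀ word, AccFrom D s word ↔ AccFrom D s' word) → s = s'

open Classical in
/-- The negotiation `N_A` associated with a dom-complete DFA over the alphabet `A × P`:
states become nodes, `dnode s = dom a` when some `(a,p)` is outgoing from `s`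
(and `Proc` otherwise, in particular at the final state), and transitions are inherited. -/
noncomputable def negOfDFA (dom : A → Set P) (D : PDFA (A × P)) : Negotiation P A where
  Node := D.S
  dnode := fun s =>
    if h : ∃ x : A × P, (D.trd s x).isSome then dom h.choose.1 else Set.univ
  ninit := D.init
  nfin := D.fin
  tr := fun s a p => D.trd s (a, p)

/-!
Relate a state `s` of the minimal DFA `D` to a node `n` of `N` when they have the same residual:
the words accepted from `s` are exactly the local paths from `n` to the final node. By minimality
a node's residual determines its state, and equal residuals transfer a transition in either
direction as long as its target can still reach the final state.

An execution of `negOfDFA dom D` is replayed in `N` from a related configuration. The processes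
taking part in an action `a` sit at nodes with an outgoing `a`-transition, whose domains are
therefore `dom a`; the configuration is reachable, so by soundness of `N` it can still finish, and
in such a configuration two processes each in the domain of the other's node are at the same
node. Hence `a` is enabled in `N`. Conversely, the completion in `N` of the replayed execution
visits only co-reachable nodes, so it is pushed back to a completion in `negOfDFA dom D`.
-/

section Automata

variable {B : Type*} {D : PDFA B} {D' : PDFA B}

theorem DRun.det {s t t' : D.S} {w : List B} (h : DRun D s w t) (h' : DRun D s w t') :
    t = t' := by
  induction w generalizing s with
  | nil => exact h.symm.trans h'
  | cons x w ih =>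
    obtain ⟨k, hk, hkw⟩ := h
    obtain ⟨k', hk', hkw'⟩ := h'
    cases hk.symm.trans hk'
    exact ih hkw hkw'

theorem dRun_append {s t : D.S} {w u : List B} :
    DRun D s (w ++ u) t ↔ ∃ k, DRun D s w k ∧ DRun D k u t := by
  induction w generalizing s with
  | nil => exact ⟨fun h => ⟨s, rfl, h⟩, fun ⟨_, hk, h⟩ => hk ▸ h⟩
  | cons x w ih =>
    constructor
    · rintro ⟨k, hk, hw⟩
      obtain ⟨j, hj, hju⟩ := ih.mp hw
      exact ⟨j, ⟨k, hk, hj⟩, hju⟩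
    · rintro ⟨j, ⟨k, hk, hw⟩, hu⟩
      exact ⟨k, hk, ih.mpr ⟨j, hw, hu⟩⟩

theorem accFrom_cons_iff {s s' : D.S} {x : B} {u : List B} (hx : D.trd s x = some s') :
    AccFrom D s (x :: u) ↔ AccFrom D s' u := by
  constructor
  · rintro ⟨t, ht, hu⟩
    cases hx.symm.trans ht
    exact hu
  · exact fun hu => ⟨s', hx, hu⟩

theorem accepts_append_iff {s : D.S} {w u : List B} (h : DRun D D.init w s) :
    Accepts D (w ++ u) ↔ AccFrom D s u := by
  constructor
  · intro hwu
    obtain ⟨k, hk, hu⟩ := dRun_append.mp hwu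
    rwa [hk.det h] at hu
  · exact fun hu => dRun_append.mpr ⟨s, h, hu⟩

variable (D D') in
def SameResidual (s : D.S) (t : D'.S) : Prop :=
  ∀ u, AccFrom D s u ↔ AccFrom D' t u

theorem SameResidual.symm {s : D.S} {t : D'.S} (h : SameResidual D D' s t) :
    SameResidual D' D t s :=
  fun u => (h u).symm

theorem SameResidual.eq (hred : ∀ s s', (∀ w, AccFrom D s w ↔ AccFrom D s' w) → s = s')
    {s s' : D.S} {t : D'.S} (h : SameResidual D D' s t) (h' : SameResidual D D' s' t) :
    s = s' :=
  hred s s' fun u => (h u).trans (h' u).symm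

theorem SameResidual.exists_trd {s s' : D.S} {t : D'.S} {x : B} (h : SameResidual D D' s t)
    (hx : D.trd s x = some s') (hco : ∃ u, AccFrom D s' u) :
    ∃ t', D'.trd t x = some t' ∧ SameResidual D D' s' t' := by
  obtain ⟨u, hu⟩ := hco
  obtain ⟨t', ht', -⟩ := (h (x :: u)).mp ((accFrom_cons_iff hx).mpr hu)
  exact ⟨t', ht', fun _ => (accFrom_cons_iff hx).symm.trans ((h _).trans (accFrom_cons_iff ht'))⟩

theorem sameResidual_of_dRun (hL : ∀ w, Accepts D w ↔ Accepts D' w) {w : List B} {s : D.S}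
    {t : D'.S} (h : DRun D D.init w s) (h' : DRun D' D'.init w t) : SameResidual D D' s t :=
  fun _ => (accepts_append_iff h).symm.trans ((hL _).trans (accepts_append_iff h'))

theorem exists_sameResidual (hL : ∀ w, Accepts D w ↔ Accepts D' w) (htrim : Trimmed D)
    (s : D.S) : ∃ t, SameResidual D D' s t := by
  obtain ⟨⟨w, hw⟩, u, hu⟩ := htrim s
  obtain ⟨t, hwt, -⟩ := dRun_append.mp ((hL _).mp ((accepts_append_iff hw).mpr hu))
  exact ⟨t, sameResidual_of_dRun hL hw hwt⟩

theorem sameResidual_fin (hL : ∀ w, Accepts D w ↔ Accepts D' w) (htrim : Trimmed D) :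
    SameResidual D D' D.fin D'.fin := by
  obtain ⟨⟨w, hw⟩, -⟩ := htrim D.fin
  exact sameResidual_of_dRun hL hw ((hL w).mp hw)

end Automata

namespace Negotiation

variable {N : Negotiation P A} {dom : A → Set P}

def toPDFA (N : Negotiation P A) : PDFA (A × P) where
  S := N.Node
  init := N.ninit
  trd n x := N.tr n x.1 x.2
  fin := N.nfin

theorem gPath_iff_dRun {n m : N.Node} {w : List (A × P)} :
    N.GPath n w m ↔ DRun N.toPDFA n w m := by
  induction w generalizing n with
  | nil => rfl
  | cons x w ih => exact exists_congr fun _ => and_congr Iff.rfl ih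

theorem WellFormed.dnode_eq_of_tr (hWF : N.WellFormed dom) {n n' : N.Node} {a : A} {p : P}
    (h : N.tr n a p = some n') : N.dnode n = dom a :=
  (hWF.2.2.2 n a p n' h).1

theorem Run.append {C C' C'' : P → N.Node} {u v : List A} (h : N.Run dom C u C')
    (h' : N.Run dom C' v C'') : N.Run dom C (u ++ v) C'' := by
  induction u generalizing C with
  | nil => exact (h : C = C') ▸ h'
  | cons a u ih =>
    obtain ⟨C₁, hstep, hrun⟩ := h
    exact ⟨C₁, hstep, ih hrun⟩

theorem Run.exists_dRun (hWF : N.WellFormed dom) {C C' : P → N.Node} {v : List A}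
    (h : N.Run dom C v C') (p : P) : ∃ u, DRun N.toPDFA (C p) u (C' p) := by
  induction v generalizing C with
  | nil => exact ⟨[], congrFun h p⟩
  | cons a v ih =>
    obtain ⟨C₁, ⟨n, hen, htr, hkeep⟩, hrun⟩ := h
    obtain ⟨u, hu⟩ := ih hrun
    by_cases hpa : p ∈ dom a
    · have hCp : C p = n := hen p (hWF.dnode_eq_of_tr (htr p hpa) ▸ hpa)
      exact ⟨(a, p) :: u, C₁ p, hCp ▸ htr p hpa, hu⟩
    · exact ⟨u, hkeep p hpa ▸ hu⟩

theorem Run.eq_of_mem_dnode (hWF : N.WellFormed dom) {C : P → N.Node} {v : List A} {p q : P}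
    (h : N.Run dom C v N.Cfin) (hq : q ∈ N.dnode (C p)) (hp : p ∈ N.dnode (C q)) :
    C p = C q := by
  induction v generalizing C with
  | nil => exact (congrFun (h : C = N.Cfin) p).trans (congrFun h q).symm
  | cons a v ih =>
    obtain ⟨C', ⟨n, hen, htr, hkeep⟩, hrun⟩ := h
    have hat : ∀ r ∈ dom a, C r = n ∧ N.dnode n = dom a := fun r hr =>
      have hdn := hWF.dnode_eq_of_tr (htr r hr)
      ⟨hen r (hdn ▸ hr), hdn⟩
    by_cases hpa : p ∈ dom a
    · obtain ⟨hCp, hdn⟩ := hat p hpa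
      rw [hCp, hdn] at hq
      exact hCp.trans (hat q hq).1.symm
    · by_cases hqa : q ∈ dom a
      · obtain ⟨hCq, hdn⟩ := hat q hqa
        rw [hCq, hdn] at hp
        exact absurd hp hpa
      · have := ih hrun (by rwa [hkeep p hpa]) (by rwa [hkeep q hqa])
        rwa [hkeep p hpa, hkeep q hqa] at this

theorem exists_step_of_enabled {n : N.Node} {C : P → N.Node} {a : A} {R : P → N.Node → Prop}
    (hen : N.Enabled n C) (htr : ∀ p ∈ dom a, ∃ n', N.tr n a p = some n' ∧ R p n')
    (hkeep : ∀ p ∉ dom a, R p (C p)) : ∃ C', N.Step dom C a C' ∧ ∀ p, R p (C' p) := by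
  classical
  choose f hf using htr
  refine ⟨fun p => if h : p ∈ dom a then f p h else C p,
    ⟨n, hen, fun p hp => ?_, fun p hp => dif_neg hp⟩, fun p => ?_⟩
  · simp only [dif_pos hp]
    exact (hf p hp).1
  · by_cases hp : p ∈ dom a
    · simp only [dif_pos hp]
      exact (hf p hp).2
    · simp only [dif_neg hp]
      exact hkeep p hp

end Negotiation

theorem negOfDFA_dnode {dom : A → Set P} {D : PDFA (A × P)} {s : D.S} {x : A × P}
    (hcons : ∀ y z : A × P, (D.trd s y).isSome → (D.trd s z).isSome → dom y.1 = dom z.1)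
    (hx : (D.trd s x).isSome) : (negOfDFA dom D).dnode s = dom x.1 := by
  have hex : ∃ y : A × P, (D.trd s y).isSome := ⟨x, hx⟩
  simp only [negOfDFA, dif_pos hex]
  exact hcons _ _ hex.choose_spec hx

section MinimalDFA

open Negotiation

variable {dom : A → Set P} {N : Negotiation P A} {D : PDFA (A × P)}

theorem MinimalDFAFor.accepts_iff_toPDFA (hmin : MinimalDFAFor D N.PathsL) (w : List (A × P)) :
    Accepts D w ↔ Accepts N.toPDFA w :=
  (hmin.1 w).trans gPath_iff_dRun

theorem negOfDFA_dnode_of_trd (hWF : N.WellFormed dom) (hmin : MinimalDFAFor D N.PathsL)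
    {s s' : D.S} {a : A} {p : P} (h : D.trd s (a, p) = some s') :
    (negOfDFA dom D).dnode s = dom a := by
  refine negOfDFA_dnode (fun y z hy hz => ?_) (x := (a, p)) (by rw [h]; rfl)
  obtain ⟨n, hn⟩ := exists_sameResidual hmin.accepts_iff_toPDFA hmin.2.1 s
  have hdom_eq : ∀ x : A × P, (D.trd s x).isSome → N.dnode n = dom x.1 := fun x hx =>
    have ⟨_, hsx⟩ := Option.isSome_iff_exists.mp hx
    have ⟨_, hnx, _⟩ := hn.exists_trd hsx (hmin.2.1 _).2
    hWF.dnode_eq_of_tr hnx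
  exact (hdom_eq y hy).symm.trans (hdom_eq z hz)

theorem exists_negOfDFA_step (hdom : ∀ a, (dom a).Nonempty) (hWF : N.WellFormed dom)
    (hmin : MinimalDFAFor D N.PathsL) {C₀ C₁ : P → N.Node} {Cd : P → D.S} {a : A}
    (hstep : N.Step dom C₀ a C₁) (hco : ∀ p, ∃ u, AccFrom N.toPDFA (C₁ p) u)
    (hrel : ∀ p, SameResidual D N.toPDFA (Cd p) (C₀ p)) :
    ∃ Cd₁, (negOfDFA dom D).Step dom Cd a Cd₁ ∧ ∀ p, SameResidual D N.toPDFA (Cd₁ p) (C₁ p) := by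
  obtain ⟨n, hen, htr, hkeep⟩ := hstep
  obtain ⟨p₀, hp₀⟩ := hdom a
  have hdn : N.dnode n = dom a := hWF.dnode_eq_of_tr (htr p₀ hp₀)
  have hrel_n : ∀ p ∈ dom a, SameResidual D N.toPDFA (Cd p) n := fun p hp =>
    hen p (hdn ▸ hp) ▸ hrel p
  have htrd : ∀ p ∈ dom a, ∃ s', D.trd (Cd p₀) (a, p) = some s' ∧
      SameResidual D N.toPDFA s' (C₁ p) := fun p hp =>
    have ⟨s', hs', hrel'⟩ := (hrel_n p₀ hp₀).symm.exists_trd (x := (a, p)) (htr p hp) (hco p)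
    ⟨s', hs', hrel'.symm⟩
  have hds : (negOfDFA dom D).dnode (Cd p₀) = dom a :=
    have ⟨_, hs, _⟩ := htrd p₀ hp₀
    negOfDFA_dnode_of_trd hWF hmin hs
  refine exists_step_of_enabled (fun q hq => (hrel_n q (hds ▸ hq)).eq hmin.2.2 (hrel_n p₀ hp₀))
    htrd fun p hp => ?_
  rw [hkeep p hp]
  exact hrel p

theorem exists_step_of_negOfDFA_step (hdom : ∀ a, (dom a).Nonempty) (hWF : N.WellFormed dom)
    (hmin : MinimalDFAFor D N.PathsL) {Cd Cd₁ : P → D.S} {C₀ : P → N.Node} {a : A}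
    (hstep : (negOfDFA dom D).Step dom Cd a Cd₁) (hfinal : ∃ v, N.Run dom C₀ v N.Cfin)
    (hrel : ∀ p, SameResidual D N.toPDFA (Cd p) (C₀ p)) :
    ∃ C₁, N.Step dom C₀ a C₁ ∧ ∀ p, SameResidual D N.toPDFA (Cd₁ p) (C₁ p) := by
  obtain ⟨s, hen, htr, hkeep⟩ := hstep
  obtain ⟨v, hv⟩ := hfinal
  obtain ⟨p₀, hp₀⟩ := hdom a
  have hds : (negOfDFA dom D).dnode s = dom a := negOfDFA_dnode_of_trd hWF hmin (htr p₀ hp₀)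
  have htrN : ∀ p ∈ dom a, ∃ n', N.tr (C₀ p) a p = some n' ∧
      SameResidual D N.toPDFA (Cd₁ p) n' := fun p hp =>
    (hen p (hds ▸ hp) ▸ hrel p).exists_trd (x := (a, p)) (htr p hp) (hmin.2.1 _).2
  have hdn : ∀ p ∈ dom a, N.dnode (C₀ p) = dom a := fun p hp =>
    have ⟨_, h, _⟩ := htrN p hp
    hWF.dnode_eq_of_tr h
  have hC₀ : ∀ p ∈ dom a, C₀ p = C₀ p₀ := fun p hp =>
    hv.eq_of_mem_dnode hWF ((hdn p hp).symm ▸ hp₀) ((hdn p₀ hp₀).symm ▸ hp)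
  refine exists_step_of_enabled (n := C₀ p₀) (fun q hq => hC₀ q (hdn p₀ hp₀ ▸ hq))
    (fun p hp => hC₀ p hp ▸ htrN p hp) fun p hp => ?_
  rw [hkeep p hp]
  exact hrel p

theorem negOfDFA_run_cfin (hdom : ∀ a, (dom a).Nonempty) (hWF : N.WellFormed dom)
    (hmin : MinimalDFAFor D N.PathsL) {v : List A} {C₀ : P → N.Node} {Cd : P → D.S}
    (hrun : N.Run dom C₀ v N.Cfin) (hrel : ∀ p, SameResidual D N.toPDFA (Cd p) (C₀ p)) :
    (negOfDFA dom D).Run dom Cd v (negOfDFA dom D).Cfin := by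
  induction v generalizing C₀ Cd with
  | nil =>
    have hfin := sameResidual_fin (D' := N.toPDFA) hmin.accepts_iff_toPDFA hmin.2.1
    funext p
    exact (hrel p).eq hmin.2.2 ((hrun : C₀ = N.Cfin) ▸ hfin)
  | cons a v ih =>
    obtain ⟨C₁, hstep, hrun⟩ := hrun
    obtain ⟨Cd₁, hstep', hrel₁⟩ :=
      exists_negOfDFA_step hdom hWF hmin hstep (hrun.exists_dRun hWF) hrel
    exact ⟨Cd₁, hstep', ih hrun hrel₁⟩

theorem exists_run_of_negOfDFA_run (hdom : ∀ a, (dom a).Nonempty) (hWF : N.WellFormed dom)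
    (hS : N.Sound dom) (hmin : MinimalDFAFor D N.PathsL) {w : List A} {Cd C : P → D.S}
    {C₀ : P → N.Node} (hreach : ∃ u, N.Run dom N.Cinit u C₀)
    (hrel : ∀ p, SameResidual D N.toPDFA (Cd p) (C₀ p))
    (hrun : (negOfDFA dom D).Run dom Cd w C) :
    ∃ C₁, N.Run dom C₀ w C₁ ∧ ∀ p, SameResidual D N.toPDFA (C p) (C₁ p) := by
  induction w generalizing Cd C₀ with
  | nil => exact ⟨C₀, rfl, (hrun : Cd = C) ▸ hrel⟩
  | cons a w ih =>
    obtain ⟨Cd₁, hstep', hrun⟩ := hrun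
    obtain ⟨u, hu⟩ := hreach
    obtain ⟨C₀', hstep, hrel₁⟩ :=
      exists_step_of_negOfDFA_step hdom hWF hmin hstep' (hS u C₀ hu) hrel
    obtain ⟨C₁, hrun₁, hrelC⟩ := ih ⟨u ++ [a], hu.append ⟨C₀', hstep, rfl⟩⟩ hrel₁ hrun
    exact ⟨C₁, ⟨C₀', hstep, hrun₁⟩, hrelC⟩

end MinimalDFA

theorem negOfDFA_sound_general (dom : A → Set P)
    (hdom : ∀ a, (dom a).Nonempty) (N : Negotiation P A)
    (hWF : N.WellFormed dom)
    (hS : N.Sound dom)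
    (D : PDFA (A × P)) (hmin : MinimalDFAFor D N.PathsL) :
    (negOfDFA dom D).Sound dom := by
  intro w Cd hrun
  obtain ⟨C, hC, hrel⟩ := exists_run_of_negOfDFA_run hdom hWF hS hmin ⟨[], rfl⟩
    (fun _ => hmin.accepts_iff_toPDFA) hrun
  obtain ⟨v, hv⟩ := hS w C hC
  exact ⟨v, negOfDFA_run_cfin hdom hWF hmin hv hrel⟩

/-- The negotiation `N_A` built from the minimal DFA of `Paths(N)` is sound. -/
theorem negOfDFA_sound [Finite P] [Finite A] (dom : A → Set P)
    (hdom : ∀ a, (dom a).Nonempty) (N : Negotiation P A) [Finite N.Node]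
    (hWF : N.WellFormed dom)
    (hfin : ∀ a p, N.tr N.nfin a p = none)
    (hS : N.Sound dom)
    (D : PDFA (A × P)) (hmin : MinimalDFAFor D N.PathsL) :
    (negOfDFA dom D).Sound dom :=
  negOfDFA_sound_general dom hdom N hWF hS D hmin
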